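/- If ρ₁, ρ₂ are density matrices with (1/2)‖ρ₁ − ρ₂‖₁ = ε ∈ (0,1), Jordan–Hahn decomposition ρ₁ − ρ₂ = ε ρ₊ − ε ρ₋, and additionally ρ₁ ≥ ε ρ₊, then S(ρ₁) − S(ρ₂) ≤ ε S(ρ₊) − ε S(ρ₋) + h(ε). -/

import Mathlib

/-!
Since `ρ₁ ≥ ε ρ₊`, the matrix `ω = (ρ₁ - ε ρ₊) / (1 - ε)` is a state, and the Jordan–Hahn
decomposition gives `ρ₁ = ε ρ₊ + (1 - ε) ω` and `ρ₂ = ε ρ₋ + (1 - ε) ω`. The entropy of a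
two-state mixture lies between the mixture of the entropies (concavity, applied to `ρ₂`) and that
plus `h(ε)` (applied to `ρ₁`); subtracting gives the claim.

Both bounds come from one inequality: if `A = C Cᴴ`, then `S(A)` is at most the Shannon entropy of
the squared column norms of `C`, i.e. at most the entropy of the weights of any pure-state ensemble
for `A`. In the eigenbasis of `A` the rows of `C` are orthogonal with
squared norms the eigenvalues `λᵢ`, and the inequality is Jensen's inequality for `-x log x`
against the substochastic matrix `|Cᵢₖ|² / λᵢ`. Concavity takes `C = √A V` with `V` the eigenbasis
of the mixture; the mixing bound takes for `C` the eigenvectors of both components, scaled by the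
square roots of their weights.
-/

open Matrix BigOperators
open scoped ComplexOrder

noncomputable section

/-- `η(x) = -x log x` (with `log 0 = 0` convention). -/
def eta (x : ℝ) : ℝ := -(x * Real.log x)

/-- Shannon entropy of a (non-negative) vector. -/
def shannonH {n : ℕ} (p : Fin n → ℝ) : ℝ := ∑ i, eta (p i)

/-- Binary entropy `h(ε) = -ε log ε - (1-ε) log(1-ε)`. -/
def binEnt (x : ℝ) : ℝ := -(x * Real.log x) - ((1 - x) * Real.log (1 - x))

/-- Eigenvalues of a Hermitian matrix in non-decreasing order. -/
def eigUp {d : ℕ} (A : Matrix (Fin d) (Fin d) ℂ) (hA : A.IsHermitian) : Fin d → ℝ :=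
  hA.eigenvalues ∘ Tuple.sort hA.eigenvalues

/-- Eigenvalues of a Hermitian matrix in non-increasing order. -/
def eigDown {d : ℕ} (A : Matrix (Fin d) (Fin d) ℂ) (hA : A.IsHermitian) : Fin d → ℝ :=
  fun i => eigUp A hA i.rev

/-- Entries of a vector rearranged in non-increasing order. -/
def sortDown {n : ℕ} (x : Fin n → ℝ) : Fin n → ℝ :=
  fun i => (x ∘ Tuple.sort x) i.rev

/-- `Majorizes y x` : the vector `x` is majorized by the vector `y`. -/
def Majorizes {n : ℕ} (y x : Fin n → ℝ) : Prop :=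
  (∀ k : ℕ, ∑ j ∈ Finset.univ.filter (fun j : Fin n => (j : ℕ) < k), sortDown x j ≤
            ∑ j ∈ Finset.univ.filter (fun j : Fin n => (j : ℕ) < k), sortDown y j) ∧
  ∑ j, x j = ∑ j, y j

/-- Von Neumann entropy `S(A) = -Tr(A log A)` expressed via eigenvalues. -/
def vnEntropy {n : Type*} [Fintype n] [DecidableEq n] (A : Matrix n n ℂ) : ℝ :=
  if hA : A.IsHermitian then ∑ i, eta (hA.eigenvalues i) else 0

/-- Trace norm of a Hermitian matrix: sum of absolute values of eigenvalues. -/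
def traceNorm {n : Type*} [Fintype n] [DecidableEq n] (A : Matrix n n ℂ) : ℝ :=
  if hA : A.IsHermitian then ∑ i, |hA.eigenvalues i| else 0

/-- A density matrix: positive semi-definite with unit trace. -/
def IsDensity {n : Type*} [Fintype n] [DecidableEq n] (ρ : Matrix n n ℂ) : Prop :=
  ρ.PosSemidef ∧ ρ.trace = 1

/-- Matrix logarithm via the spectral decomposition (with `log 0 = 0` convention). -/
def mlog {n : Type*} [Fintype n] [DecidableEq n] (A : Matrix n n ℂ) : Matrix n n ℂ :=
  if hA : A.IsHermitian then
    (hA.eigenvectorUnitary : Matrix n n ℂ)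
      * Matrix.diagonal (fun i => (Real.log (hA.eigenvalues i) : ℂ))
      * (star (hA.eigenvectorUnitary : Matrix n n ℂ))
  else 0

/-- Umegaki relative entropy `D(ρ‖σ) = Tr(ρ (log ρ - log σ))`. -/
def relEnt {n : Type*} [Fintype n] [DecidableEq n] (ρ σ : Matrix n n ℂ) : ℝ :=
  ((ρ * (mlog ρ - mlog σ)).trace).re

/-- Max-relative entropy `D_max(ρ‖σ) = inf {λ > 0 : ρ ≤ e^λ σ}`. -/
def dMax {n : Type*} [Fintype n] [DecidableEq n] (ρ σ : Matrix n n ℂ) : ℝ :=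
  sInf {l : ℝ | 0 < l ∧ (Real.exp l • σ - ρ).PosSemidef}

/-- Partial trace over the first tensor factor. -/
def ptraceA {dA dB : ℕ} (ρ : Matrix (Fin dA × Fin dB) (Fin dA × Fin dB) ℂ) :
    Matrix (Fin dB) (Fin dB) ℂ :=
  Matrix.of fun i j => ∑ a, ρ (a, i) (a, j)

/-- Conditional entropy `S(A|B)_ρ = S(ρ_{AB}) - S(ρ_B)`. -/
def condEnt {dA dB : ℕ} (ρ : Matrix (Fin dA × Fin dB) (Fin dA × Fin dB) ℂ) : ℝ :=
  vnEntropy ρ - vnEntropy (ptraceA ρ)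

open Real (negMulLog)
open Complex (normSq)
open scoped MatrixOrder

lemma eta_eq_negMulLog : eta = negMulLog := by
  funext x
  simp [eta, Real.negMulLog_eq_neg]

lemma binEnt_eq_negMulLog (x : ℝ) : binEnt x = negMulLog x + negMulLog (1 - x) := by
  simp [binEnt, Real.negMulLog_eq_neg, sub_eq_add_neg]

lemma sum_mul_negMulLog_le {ι : Type*} [Fintype ι] {w x : ι → ℝ} (hw : ∀ i, 0 ≤ w i)
    (hw1 : ∑ i, w i ≤ 1) (hx : ∀ i, 0 ≤ x i) :
    ∑ i, w i * negMulLog (x i) ≤ negMulLog (∑ i, w i * x i) := by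
  -- the missing weight `1 - ∑ i, w i` sits at `0`, where `negMulLog` vanishes
  simpa using Real.concaveOn_negMulLog.map_add_sum_le (t := .univ) (q := 0)
    (fun i _ => hw i) (sub_add_cancel 1 _) (fun i _ => Set.mem_Ici.2 (hx i))
    (sub_nonneg.2 hw1) Set.self_mem_Ici

lemma sum_negMulLog_le_sum_negMulLog_mulVec {m n : Type*} [Fintype m] [Fintype n]
    {M : Matrix m n ℝ} {p : n → ℝ} (hM : ∀ k i, 0 ≤ M k i) (hrow : ∀ k, ∑ i, M k i ≤ 1)
    (hcol : ∀ i, p i ≠ 0 → ∑ k, M k i = 1) (hp : ∀ i, 0 ≤ p i) :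
    ∑ i, negMulLog (p i) ≤ ∑ k, negMulLog ((M *ᵥ p) k) :=
  calc ∑ i, negMulLog (p i) = ∑ i, (∑ k, M k i) * negMulLog (p i) := by
        refine Finset.sum_congr rfl fun i _ => ?_
        rcases eq_or_ne (p i) 0 with h | h
        · simp [h]
        · rw [hcol i h, one_mul]
    _ = ∑ k, ∑ i, M k i * negMulLog (p i) := by
        simp only [Finset.sum_mul]
        exact Finset.sum_comm
    _ ≤ ∑ k, negMulLog ((M *ᵥ p) k) :=
        Finset.sum_le_sum fun k _ => sum_mul_negMulLog_le (hM k) (hrow k) hp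

namespace Matrix

lemma sqrt_smul_mul_conjTranspose_sqrt_smul {m n : Type*} [Fintype m] {t : ℝ} (ht : 0 ≤ t)
    (C : Matrix n m ℂ) : (√t • C) * (√t • C)ᴴ = t • (C * Cᴴ) := by
  rw [conjTranspose_smul, star_trivial, smul_mul, Matrix.mul_smul, smul_smul,
    Real.mul_self_sqrt ht]

lemma conjTranspose_sqrt_smul_mul_sqrt_smul {m n : Type*} [Fintype n] {t : ℝ} (ht : 0 ≤ t)
    (C : Matrix n m ℂ) : (√t • C)ᴴ * (√t • C) = t • (Cᴴ * C) := by
  rw [conjTranspose_smul, star_trivial, smul_mul, Matrix.mul_smul, smul_smul,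
    Real.mul_self_sqrt ht]

lemma mul_conjTranspose_self_apply_self {m n : Type*} [Fintype m] (C : Matrix n m ℂ) (i : n) :
    (C * Cᴴ) i i = ∑ k, (normSq (C i k) : ℂ) := by
  simp [mul_apply, Complex.mul_conj]

lemma conjTranspose_mul_self_apply_self {m n : Type*} [Fintype n] (C : Matrix n m ℂ) (k : m) :
    (Cᴴ * C) k k = ∑ i, (normSq (C i k) : ℂ) := by
  simp [mul_apply, Complex.normSq_eq_conj_mul_self]

/-- Bessel's inequality for the orthonormal rows `C i / √(p i)`, `p i ≠ 0`, tested against the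
`k`-th basis vector; rows with `p i = 0` vanish, so the junk value of `/ 0` is harmless. -/
lemma sum_normSq_div_le_one {m n : Type*} [Fintype m] [Fintype n] [DecidableEq n]
    {C : Matrix n m ℂ} {p : n → ℝ}
    (hC : C * Cᴴ = diagonal fun i => (p i : ℂ)) (k : m) :
    ∑ i, normSq (C i k) / p i ≤ 1 := by
  set s := ∑ i, normSq (C i k) / p i
  set u : n → ℂ := fun i => C i k / p i
  have hterm : ∀ i, star (C i k) * u i = (normSq (C i k) / p i : ℝ) := fun i => by
    simp [u, mul_div_assoc', Complex.normSq_eq_conj_mul_self]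
  have hwk : (Cᴴ *ᵥ u) k = s := by
    simp only [mulVec, dotProduct, conjTranspose_apply, hterm, s]
    push_cast
    rfl
  have hw : ∑ l, (normSq ((Cᴴ *ᵥ u) l) : ℂ) = s := by
    have hterm' : ∀ i, star (u i) * (p i * u i) = (normSq (C i k) / p i : ℝ) := fun i => by
      rcases eq_or_ne (p i) 0 with h | h
      · simp [u, h]
      · simp only [u, star_div₀, Complex.star_def, Complex.conj_ofReal]
        push_cast
        field_simp
        rw [Complex.normSq_eq_conj_mul_self]
    calc ∑ l, (normSq ((Cᴴ *ᵥ u) l) : ℂ) = star (Cᴴ *ᵥ u) ⬝ᵥ (Cᴴ *ᵥ u) := by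
          simp [dotProduct, Complex.normSq_eq_conj_mul_self]
      _ = star u ⬝ᵥ (C * Cᴴ) *ᵥ u := by
          rw [star_mulVec, conjTranspose_conjTranspose, ← dotProduct_mulVec, mulVec_mulVec]
      _ = s := by
          simp only [hC, dotProduct, mulVec_diagonal, Pi.star_apply, hterm', s]
          push_cast
          rfl
  have hs : s * s ≤ s := by
    have hw' : ∑ l, normSq ((Cᴴ *ᵥ u) l) = s := by exact_mod_cast hw
    calc s * s = normSq ((Cᴴ *ᵥ u) k) := by rw [hwk, Complex.normSq_ofReal]
      _ ≤ s := hw' ▸ Finset.single_le_sum (fun l _ => Complex.normSq_nonneg _) (Finset.mem_univ k)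
  nlinarith

lemma sum_negMulLog_le_of_mul_conjTranspose_eq_diagonal {m n : Type*} [Fintype m] [Fintype n]
    [DecidableEq n] {C : Matrix n m ℂ} {p : n → ℝ} (hp : ∀ i, 0 ≤ p i)
    (hC : C * Cᴴ = diagonal fun i => (p i : ℂ)) :
    ∑ i, negMulLog (p i) ≤ ∑ k, negMulLog ((Cᴴ * C) k k).re := by
  have hrow : ∀ i, ∑ k, normSq (C i k) = p i := fun i => by
    have h := congr_fun₂ hC i i
    rw [mul_conjTranspose_self_apply_self, diagonal_apply_eq] at h
    exact_mod_cast h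
  have hzero : ∀ i k, p i = 0 → normSq (C i k) = 0 := fun i k h =>
    (Finset.sum_eq_zero_iff_of_nonneg fun _ _ => Complex.normSq_nonneg _).1
      ((hrow i).trans h) k (Finset.mem_univ k)
  let M : Matrix m n ℝ := of fun k i => normSq (C i k) / p i
  have hMp : ∀ k, (M *ᵥ p) k = ((Cᴴ * C) k k).re := fun k => by
    rw [conjTranspose_mul_self_apply_self, ← Complex.ofReal_sum, Complex.ofReal_re]
    refine Finset.sum_congr rfl fun i _ => ?_
    rcases eq_or_ne (p i) 0 with h | h
    · simp [M, h, hzero i k h]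
    · exact div_mul_cancel₀ _ h
  calc ∑ i, negMulLog (p i) ≤ ∑ k, negMulLog ((M *ᵥ p) k) :=
        sum_negMulLog_le_sum_negMulLog_mulVec
          (fun k i => div_nonneg (Complex.normSq_nonneg _) (hp i)) (sum_normSq_div_le_one hC)
          (fun i h => by simp only [M, of_apply, ← Finset.sum_div, hrow, div_self h]) hp
    _ = ∑ k, negMulLog ((Cᴴ * C) k k).re := by simp only [hMp]

lemma IsHermitian.vnEntropy_eq {n : Type*} [Fintype n] [DecidableEq n] {A : Matrix n n ℂ}
    (hA : A.IsHermitian) : vnEntropy A = ∑ i, negMulLog (hA.eigenvalues i) := by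
  rw [vnEntropy, dif_pos hA, eta_eq_negMulLog]

lemma IsHermitian.star_eigenvectorUnitary_mul_mul_eigenvectorUnitary {n : Type*} [Fintype n]
    [DecidableEq n] {A : Matrix n n ℂ} (hA : A.IsHermitian) :
    star (hA.eigenvectorUnitary : Matrix n n ℂ) * A * hA.eigenvectorUnitary =
      diagonal fun i => (hA.eigenvalues i : ℂ) := by
  have h := hA.conjStarAlgAut_star_eigenvectorUnitary
  rw [Unitary.conjStarAlgAut_star_apply] at h
  exact h

lemma PosSemidef.vnEntropy_le_of_eq_mul_conjTranspose {m n : Type*} [Fintype m] [Fintype n]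
    [DecidableEq n] {A : Matrix n n ℂ} (hA : A.PosSemidef) {C : Matrix n m ℂ}
    (hC : A = C * Cᴴ) : vnEntropy A ≤ ∑ k, negMulLog ((Cᴴ * C) k k).re := by
  set V : Matrix n n ℂ := (hA.1.eigenvectorUnitary : Matrix n n ℂ)
  have hV : V * star V = 1 := Unitary.mul_star_self_of_mem hA.1.eigenvectorUnitary.2
  have hstarV : (star V)ᴴ = V := by rw [star_eq_conjTranspose, conjTranspose_conjTranspose]
  have hdiag : (star V * C) * (star V * C)ᴴ = diagonal fun i => (hA.1.eigenvalues i : ℂ) := by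
    rw [← hA.1.star_eigenvectorUnitary_mul_mul_eigenvectorUnitary, conjTranspose_mul, hstarV]
    subst hC
    simp only [V, Matrix.mul_assoc]
  have hgram : (star V * C)ᴴ * (star V * C) = Cᴴ * C := by
    rw [conjTranspose_mul, hstarV, Matrix.mul_assoc, ← Matrix.mul_assoc V, hV, Matrix.one_mul]
  rw [hA.1.vnEntropy_eq, ← hgram]
  exact sum_negMulLog_le_of_mul_conjTranspose_eq_diagonal hA.eigenvalues_nonneg hdiag

lemma PosSemidef.sqrt_mul_conjTranspose_sqrt_mul {m n : Type*} [Fintype n] [DecidableEq n]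
    {A : Matrix n n ℂ} (hA : A.PosSemidef) (V : Matrix n m ℂ) :
    (CFC.sqrt A * V)ᴴ * (CFC.sqrt A * V) = Vᴴ * A * V := by
  rw [conjTranspose_mul, (CFC.sqrt_nonneg A).posSemidef.1.eq, Matrix.mul_assoc,
    ← Matrix.mul_assoc (CFC.sqrt A), CFC.sqrt_mul_sqrt_self A hA.nonneg, Matrix.mul_assoc]

lemma PosSemidef.sqrt_mul_mul_conjTranspose {n : Type*} [Fintype n] [DecidableEq n]
    {A : Matrix n n ℂ} (hA : A.PosSemidef) {V : Matrix n n ℂ} (hV : V ∈ unitaryGroup n ℂ) :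
    (CFC.sqrt A * V) * (CFC.sqrt A * V)ᴴ = A := by
  rw [conjTranspose_mul, (CFC.sqrt_nonneg A).posSemidef.1.eq, Matrix.mul_assoc,
    ← Matrix.mul_assoc V, ← star_eq_conjTranspose, Unitary.mul_star_self_of_mem hV,
    Matrix.one_mul, CFC.sqrt_mul_sqrt_self A hA.nonneg]

lemma PosSemidef.vnEntropy_le_sum_negMulLog_diag {n : Type*} [Fintype n] [DecidableEq n]
    {A : Matrix n n ℂ} (hA : A.PosSemidef) {V : Matrix n n ℂ} (hV : V ∈ unitaryGroup n ℂ) :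
    vnEntropy A ≤ ∑ i, negMulLog ((star V * A * V) i i).re := by
  simpa only [hA.sqrt_mul_conjTranspose_sqrt_mul, star_eq_conjTranspose] using
    hA.vnEntropy_le_of_eq_mul_conjTranspose (hA.sqrt_mul_mul_conjTranspose hV).symm

lemma PosSemidef.sqrt_mul_eigenvectorUnitary_gram {n : Type*} [Fintype n] [DecidableEq n]
    {A : Matrix n n ℂ} (hA : A.PosSemidef) :
    (CFC.sqrt A * (hA.1.eigenvectorUnitary : Matrix n n ℂ))ᴴ *
        (CFC.sqrt A * (hA.1.eigenvectorUnitary : Matrix n n ℂ)) =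
      diagonal fun i => (hA.1.eigenvalues i : ℂ) := by
  rw [hA.sqrt_mul_conjTranspose_sqrt_mul, ← star_eq_conjTranspose,
    hA.1.star_eigenvectorUnitary_mul_mul_eigenvectorUnitary]

lemma PosSemidef.re_diag_conj_nonneg {n : Type*} [Fintype n] {A : Matrix n n ℂ}
    (hA : A.PosSemidef) (V : Matrix n n ℂ) (i : n) : 0 ≤ ((star V * A * V) i i).re :=
  (Complex.nonneg_iff.1 (hA.conjTranspose_mul_mul_same V).diag_nonneg).1

lemma IsHermitian.sum_eigenvalues_eq_one {n : Type*} [Fintype n] [DecidableEq n]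
    {A : Matrix n n ℂ} (hA : A.IsHermitian) (htr : A.trace = 1) : ∑ i, hA.eigenvalues i = 1 := by
  have h : ((∑ i, hA.eigenvalues i : ℝ) : ℂ) = 1 := by
    rw [Complex.ofReal_sum, ← htr, hA.trace_eq_sum_eigenvalues]
    rfl
  exact_mod_cast h

end Matrix

lemma convex_setOf_posSemidef {n : Type*} [Fintype n] :
    Convex ℝ {A : Matrix n n ℂ | A.PosSemidef} :=
  fun _ hA _ hB _ _ ha hb _ => (hA.smul ha).add (hB.smul hb)

theorem concaveOn_vnEntropy {n : Type*} [Fintype n] [DecidableEq n] :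
    ConcaveOn ℝ {A : Matrix n n ℂ | A.PosSemidef} vnEntropy := by
  refine ⟨convex_setOf_posSemidef, fun A hA B hB a b ha hb hab => ?_⟩
  have hρ : (a • A + b • B).PosSemidef := convex_setOf_posSemidef hA hB ha hb hab
  set V : Matrix n n ℂ := (hρ.1.eigenvectorUnitary : Matrix n n ℂ)
  have hV : V ∈ unitaryGroup n ℂ := hρ.1.eigenvectorUnitary.2
  set x := fun i => ((star V * A * V) i i).re
  set y := fun i => ((star V * B * V) i i).re
  have hmix : ∀ i, hρ.1.eigenvalues i = a * x i + b * y i := fun i => by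
    have h := congr_arg Complex.re
      (congr_fun₂ hρ.1.star_eigenvectorUnitary_mul_mul_eigenvectorUnitary i i)
    simp only [Matrix.mul_add, Matrix.add_mul, Matrix.mul_smul, Matrix.smul_mul,
      Matrix.add_apply, Matrix.smul_apply, Complex.add_re, Complex.real_smul,
      Complex.re_ofReal_mul, diagonal_apply_eq, Complex.ofReal_re] at h
    exact h.symm
  calc a • vnEntropy A + b • vnEntropy B
      ≤ a * ∑ i, negMulLog (x i) + b * ∑ i, negMulLog (y i) := by
        rw [smul_eq_mul, smul_eq_mul]
        gcongr
        · exact hA.vnEntropy_le_sum_negMulLog_diag hV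
        · exact hB.vnEntropy_le_sum_negMulLog_diag hV
    _ = ∑ i, (a • negMulLog (x i) + b • negMulLog (y i)) := by
        simp only [Finset.mul_sum, smul_eq_mul, Finset.sum_add_distrib]
    _ ≤ ∑ i, negMulLog (a • x i + b • y i) := Finset.sum_le_sum fun i _ =>
        Real.concaveOn_negMulLog.2 (hA.re_diag_conj_nonneg V i) (hB.re_diag_conj_nonneg V i)
          ha hb hab
    _ = vnEntropy (a • A + b • B) := by
        simp only [hρ.1.vnEntropy_eq, hmix, smul_eq_mul]

lemma IsDensity.sum_negMulLog_mul_eigenvalues {n : Type*} [Fintype n] [DecidableEq n]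
    {A : Matrix n n ℂ} (hA : IsDensity A) (t : ℝ) :
    ∑ j, negMulLog (t * hA.1.1.eigenvalues j) = negMulLog t + t * vnEntropy A := by
  simp only [Real.negMulLog_mul, Finset.sum_add_distrib, ← Finset.sum_mul, ← Finset.mul_sum,
    hA.1.1.sum_eigenvalues_eq_one hA.2, hA.1.1.vnEntropy_eq, one_mul]

theorem vnEntropy_smul_add_smul_le {n : Type*} [Fintype n] [DecidableEq n]
    {A B : Matrix n n ℂ} (hA : IsDensity A) (hB : IsDensity B) {t : ℝ} (ht0 : 0 ≤ t)
    (ht1 : t ≤ 1) :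
    vnEntropy (t • A + (1 - t) • B) ≤ t * vnEntropy A + (1 - t) * vnEntropy B + binEnt t := by
  have ht1' : 0 ≤ 1 - t := sub_nonneg.2 ht1
  set Φ := fromCols (√t • (CFC.sqrt A * (hA.1.1.eigenvectorUnitary : Matrix n n ℂ)))
    (√(1 - t) • (CFC.sqrt B * (hB.1.1.eigenvectorUnitary : Matrix n n ℂ)))
  have hΦ : t • A + (1 - t) • B = Φ * Φᴴ := by
    rw [conjTranspose_fromCols_eq_fromRows_conjTranspose, fromCols_mul_fromRows,
      sqrt_smul_mul_conjTranspose_sqrt_smul ht0, sqrt_smul_mul_conjTranspose_sqrt_smul ht1',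
      hA.1.sqrt_mul_mul_conjTranspose hA.1.1.eigenvectorUnitary.2,
      hB.1.sqrt_mul_mul_conjTranspose hB.1.1.eigenvectorUnitary.2]
  have hmix : (t • A + (1 - t) • B).PosSemidef :=
    convex_setOf_posSemidef hA.1 hB.1 ht0 ht1' (add_sub_cancel t 1)
  calc vnEntropy (t • A + (1 - t) • B) ≤ ∑ k, negMulLog ((Φᴴ * Φ) k k).re :=
        hmix.vnEntropy_le_of_eq_mul_conjTranspose hΦ
    _ = ∑ j, negMulLog (t * hA.1.1.eigenvalues j) +
          ∑ j, negMulLog ((1 - t) * hB.1.1.eigenvalues j) := by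
        simp only [Φ, conjTranspose_fromCols_eq_fromRows_conjTranspose, fromRows_mul_fromCols,
          Fintype.sum_sum_type, fromBlocks_apply₁₁, fromBlocks_apply₂₂,
          conjTranspose_sqrt_smul_mul_sqrt_smul ht0, conjTranspose_sqrt_smul_mul_sqrt_smul ht1',
          hA.1.sqrt_mul_eigenvectorUnitary_gram, hB.1.sqrt_mul_eigenvectorUnitary_gram,
          Matrix.smul_apply, diagonal_apply_eq, Complex.real_smul, Complex.re_ofReal_mul,
          Complex.ofReal_re]
    _ = t * vnEntropy A + (1 - t) * vnEntropy B + binEnt t := by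
        rw [hA.sum_negMulLog_mul_eigenvalues, hB.sum_negMulLog_mul_eigenvalues,
          binEnt_eq_negMulLog]
        ring

theorem entropic_inequality_of_loewner_general {d : ℕ} (ρ₁ ρ₂ ρp ρm : Matrix (Fin d) (Fin d) ℂ)
    (h1 : IsDensity ρ₁) (hp : IsDensity ρp) (hm : IsDensity ρm)
    (ε : ℝ) (hε : ε ∈ Set.Ioo (0 : ℝ) 1)
    (hJH : ρ₁ - ρ₂ = ε • ρp - ε • ρm)
    (hloewner : (ρ₁ - ε • ρp).PosSemidef) :
    vnEntropy ρ₁ - vnEntropy ρ₂ ≤ ε * vnEntropy ρp - ε * vnEntropy ρm + binEnt ε := by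
  obtain ⟨hε0, hε1⟩ := hε
  have hε1' : 1 - ε ≠ 0 := sub_ne_zero.2 hε1.ne'
  set ω := (1 - ε)⁻¹ • (ρ₁ - ε • ρp)
  have hω : IsDensity ω := by
    refine ⟨hloewner.smul (inv_nonneg.2 (sub_nonneg.2 hε1.le)), ?_⟩
    rw [trace_smul, trace_sub, trace_smul, h1.2, hp.2, Complex.real_smul, Complex.real_smul,
      mul_one, ← Complex.ofReal_one, ← Complex.ofReal_sub, ← Complex.ofReal_mul,
      inv_mul_cancel₀ hε1']
  have hρ₁ : ρ₁ = ε • ρp + (1 - ε) • ω := by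
    rw [smul_smul, mul_inv_cancel₀ hε1', one_smul, add_sub_cancel]
  have hρ₂ : ρ₂ = ε • ρm + (1 - ε) • ω := by
    rw [smul_smul, mul_inv_cancel₀ hε1', one_smul, ← sub_sub_cancel ρ₁ ρ₂, hJH]
    abel
  have hupper := vnEntropy_smul_add_smul_le hp hω hε0.le hε1.le
  have hlower :=
    concaveOn_vnEntropy.2 hm.1 hω.1 hε0.le (sub_nonneg.2 hε1.le) (add_sub_cancel ε 1)
  rw [smul_eq_mul, smul_eq_mul, ← hρ₂] at hlower
  rw [← hρ₁] at hupper
  linarith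

/-- the fundamental entropic inequality in the special case `ρ₁ ≥ ε ρ₊`. -/
theorem entropic_inequality_of_loewner {d : ℕ} (ρ₁ ρ₂ ρp ρm : Matrix (Fin d) (Fin d) ℂ)
    (h1 : IsDensity ρ₁) (h2 : IsDensity ρ₂) (hp : IsDensity ρp) (hm : IsDensity ρm)
    (ε : ℝ) (hε : ε ∈ Set.Ioo (0 : ℝ) 1)
    (htr : traceNorm (ρ₁ - ρ₂) / 2 = ε)
    (hJH : ρ₁ - ρ₂ = ε • ρp - ε • ρm)
    (horth : ρp * ρm = 0)
    (hloewner : (ρ₁ - ε • ρp).PosSemidef) :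
    vnEntropy ρ₁ - vnEntropy ρ₂ ≤ ε * vnEntropy ρp - ε * vnEntropy ρm + binEnt ε :=
  entropic_inequality_of_loewner_general ρ₁ ρ₂ ρp ρm h1 hp hm ε hε hJH hloewner
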